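/- Let F be a probability measure supported in (-∞,1] with finite mean, assume E(F) ≤ μ < 1, let ν* ∈ [0, 1/(1−μ)] satisfy ∫ 1/(1−(x−μ)ν*) dF(x) ≤ 1, and set Y = 1−(X−μ)ν* where X has distribution F. Then for every c0 ≥ 2.163 and every λ ∈ [−1/2, 0], E[Y^λ (log Y)²] ≤ c0 + (1−E(F))/(1−μ). -/

import Mathlib

open MeasureTheory ProbabilityTheory Set Filter
open scoped ENNReal NNReal Classical BoundedContinuousFunction

noncomputable section

/-- Kullback–Leibler divergence `D(F‖G)` between measures on ℝ
(`+∞` unless `F ≪ G` and `log (dF/dG)` is `F`-integrable). -/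
def KL (F G : Measure ℝ) : ℝ≥0∞ :=
  if F ≪ G ∧ Integrable (fun x => Real.log (F.rnDeriv G x).toReal) F
  then ENNReal.ofReal (∫ x, Real.log (F.rnDeriv G x).toReal ∂F) else ⊤

/-- `D_inf(F,μ;𝒜)`: infimum of `D(F‖G)` over probability measures `G` supported in
`(-∞,1]` with (finite) mean `E(G) > μ`.  (For `G` supported in `(-∞,1]` the mean is
well defined in `[-∞,1]`, and `E(G) > μ` holds iff `G` has integrable identity with
`∫ x dG > μ`.) -/
def DinfSemi (F : Measure ℝ) (μ : ℝ) : ℝ≥0∞ :=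
  ⨅ G ∈ {G : Measure ℝ | IsProbabilityMeasure G ∧ G (Set.Ioi 1) = 0 ∧
      Integrable (fun x : ℝ => x) G ∧ μ < ∫ x, x ∂G}, KL F G

/-- `D_inf(F,μ;𝒜_a)`: infimum of `D(F‖G)` over probability measures `G` supported in
`[a,1]` with mean `E(G) > μ`. -/
def DinfBdd (a : ℝ) (F : Measure ℝ) (μ : ℝ) : ℝ≥0∞ :=
  ⨅ G ∈ {G : Measure ℝ | IsProbabilityMeasure G ∧ G (Set.Icc a 1) = 1 ∧
      μ < ∫ x, x ∂G}, KL F G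

/-- `L(ν;F,μ) = ∫ log(1-(x-μ)ν) dF(x)`, as an extended real number in `[-∞,∞)`:
the value is `⊥ = -∞` when the integrand equals `-∞` on a non-`F`-null set or when
its (necessarily negative, for `F` supported in `(-∞,1]` with finite mean) part fails
to be integrable. -/
def LL (F : Measure ℝ) (μ ν : ℝ) : EReal :=
  if Integrable (fun x => Real.log (1 - (x - μ) * ν)) F ∧ F {x | 1 - (x - μ) * ν ≤ 0} = 0
  then ((∫ x, Real.log (1 - (x - μ) * ν) ∂F : ℝ) : EReal)
  else ⊥

/-- `D̃_inf(F,μ) = sup_{0 ≤ ν ≤ 1/(1-μ)} L(ν;F,μ)`. -/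
def Dtilde (F : Measure ℝ) (μ : ℝ) : EReal :=
  ⨆ ν ∈ Set.Icc (0 : ℝ) (1 - μ)⁻¹, LL F μ ν

/-- The moment generating function of `F` is finite in a neighborhood of the origin. -/
def MGFNearZero (F : Measure ℝ) : Prop :=
  ∃ ε > (0 : ℝ), ∀ l : ℝ, |l| < ε → Integrable (fun x => Real.exp (l * x)) F

/-- Fenchel–Legendre transform `Λ*(x) = sup_λ {λx - log ∫ e^{λu} dF(u)}` of the
logarithmic moment generating function of `F`. -/
def Legendre (F : Measure ℝ) (x : ℝ) : EReal :=
  ⨆ l : ℝ, ((l * x : ℝ) : EReal) -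
    ENNReal.log (∫⁻ y, ENNReal.ofReal (Real.exp (l * y)) ∂F)

/-- Empirical distribution `F̂_t = (1/t) ∑_{i<t} δ_{X_i}`. -/
def empMeas {Ω : Type*} [MeasurableSpace Ω] (X : ℕ → Ω → ℝ) (t : ℕ) (ω : Ω) : Measure ℝ :=
  (t : ℝ≥0∞)⁻¹ • ∑ i ∈ Finset.range t, Measure.dirac (X i ω)

/-- Empirical mean `μ̂_t = (1/t) ∑_{i<t} X_i`. -/
def empMean {Ω : Type*} (X : ℕ → Ω → ℝ) (t : ℕ) (ω : Ω) : ℝ :=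
  (∑ i ∈ Finset.range t, X i ω) / t

end

/-!
For `y > 0` and `λ ∈ [-1/2, 0]` one has the pointwise bound `y^λ (log y)² ≤ 16 e⁻²/y + 4 e⁻² y`
(from `u ≤ e^{u-1}`, squared). Taking expectations, the constraint `∫ 1/Y dF ≤ 1` controls the
first term and `E[Y] = 1 - (E(F) - μ)ν* ≤ (1 - E(F))/(1 - μ)` the second; `e⁻² ≤ 1/7` finishes.
-/

open Real

lemma exp_neg_two_le_one_div_seven : exp (-2) ≤ 1 / 7 := by
  have h : exp (-2) = exp (-1) ^ 2 := by rw [← exp_nat_mul]; norm_num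
  rw [h]
  nlinarith [exp_neg_one_lt_d9, exp_pos (-1)]

lemma sq_le_exp_two_mul_sub_two {u : ℝ} (hu : 0 ≤ u) : u ^ 2 ≤ exp (2 * u - 2) := by
  have h : u ≤ exp (u - 1) := by linarith [add_one_le_exp (u - 1)]
  calc u ^ 2 ≤ exp (u - 1) ^ 2 := pow_le_pow_left₀ hu h 2
    _ = exp (2 * u - 2) := by rw [← exp_nat_mul]; ring_nf

/-- `rpow_mul_log_sq_le` in the variable `s = log y`: the weight `e^{λs}` is at most `e^{-s/2}`
for `s ≤ 0` and at most `1` for `s ≥ 0`, and `s²` is absorbed by `e^{-s/2}` resp. `e^s`. -/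
lemma exp_mul_mul_sq_le {l : ℝ} (hl : l ∈ Icc (-(1 / 2) : ℝ) 0) (s : ℝ) :
    exp (l * s) * s ^ 2 ≤ 16 * exp (-2) * exp (-s) + 4 * exp (-2) * exp s := by
  obtain ⟨hl₁, hl₂⟩ := hl
  have h16 : 0 ≤ 16 * exp (-2) * exp (-s) := by positivity
  have h4 : 0 ≤ 4 * exp (-2) * exp s := by positivity
  rcases le_total s 0 with hs | hs
  · have hweight : exp (l * s) ≤ exp (-s / 2) := exp_le_exp.2 (by nlinarith)
    have hsq : s ^ 2 ≤ 16 * exp (-s / 2 - 2) := by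
      have := sq_le_exp_two_mul_sub_two (u := -s / 4) (by linarith)
      ring_nf at this ⊢
      linarith
    calc exp (l * s) * s ^ 2 ≤ exp (-s / 2) * (16 * exp (-s / 2 - 2)) :=
          mul_le_mul hweight hsq (sq_nonneg s) (exp_pos _).le
      _ = 16 * exp (-2) * exp (-s) := by
          rw [mul_left_comm, ← exp_add, mul_assoc, ← exp_add]; ring_nf
      _ ≤ _ := le_add_of_nonneg_right h4
  · have hweight : exp (l * s) ≤ 1 := exp_le_one_iff.2 (mul_nonpos_of_nonpos_of_nonneg hl₂ hs)
    have hsq : s ^ 2 ≤ 4 * exp (-2) * exp s := by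
      have := sq_le_exp_two_mul_sub_two (u := s / 2) (by linarith)
      rw [mul_assoc, ← exp_add]
      ring_nf at this ⊢
      linarith
    calc exp (l * s) * s ^ 2 ≤ 1 * (4 * exp (-2) * exp s) :=
          mul_le_mul hweight hsq (sq_nonneg s) zero_le_one
      _ ≤ _ := by linarith

lemma rpow_mul_log_sq_le {l : ℝ} (hl : l ∈ Icc (-(1 / 2) : ℝ) 0) {y : ℝ} (hy : 0 < y) :
    y ^ l * log y ^ 2 ≤ 16 * exp (-2) * y⁻¹ + 4 * exp (-2) * y := by
  have h := exp_mul_mul_sq_le hl (log y)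
  rwa [exp_neg (log y), exp_log hy, mul_comm l, ← rpow_def_of_pos hy] at h

section InverseMoment

variable {Ω : Type*} [MeasurableSpace Ω] {P : Measure Ω} {Y : Ω → ℝ}

lemma ae_pos_of_lintegral_inv_ofReal_ne_top (hY : AEMeasurable Y P)
    (h : ∫⁻ x, (ENNReal.ofReal (Y x))⁻¹ ∂P ≠ ∞) : ∀ᵐ x ∂P, 0 < Y x := by
  filter_upwards [ae_lt_top' (hY.ennreal_ofReal.inv) h] with x hx
  by_contra! hle
  simp [ENNReal.ofReal_eq_zero.2 hle] at hx

lemma toReal_inv_ofReal_ae_eq (hpos : ∀ᵐ x ∂P, 0 < Y x) :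
    (fun x => ((ENNReal.ofReal (Y x))⁻¹).toReal) =ᵐ[P] fun x => (Y x)⁻¹ := by
  filter_upwards [hpos] with x hx
  rw [ENNReal.toReal_inv, ENNReal.toReal_ofReal hx.le]

lemma integrable_inv_of_lintegral_inv_ofReal_ne_top (hY : AEMeasurable Y P)
    (h : ∫⁻ x, (ENNReal.ofReal (Y x))⁻¹ ∂P ≠ ∞) : Integrable (fun x => (Y x)⁻¹) P :=
  (integrable_toReal_of_lintegral_ne_top hY.ennreal_ofReal.inv h).congr
    (toReal_inv_ofReal_ae_eq (ae_pos_of_lintegral_inv_ofReal_ne_top hY h))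

lemma integral_inv_le_of_lintegral_inv_ofReal_le_one (hY : AEMeasurable Y P)
    (h : ∫⁻ x, (ENNReal.ofReal (Y x))⁻¹ ∂P ≤ 1) : ∫ x, (Y x)⁻¹ ∂P ≤ 1 := by
  have hfin : ∫⁻ x, (ENNReal.ofReal (Y x))⁻¹ ∂P ≠ ∞ := ne_top_of_le_ne_top ENNReal.one_ne_top h
  have hg : AEMeasurable (fun x => (ENNReal.ofReal (Y x))⁻¹) P := hY.ennreal_ofReal.inv
  have hpos := ae_pos_of_lintegral_inv_ofReal_ne_top hY hfin
  rw [← integral_congr_ae (toReal_inv_ofReal_ae_eq hpos), integral_toReal hg (ae_lt_top' hg hfin)]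
  exact ENNReal.toReal_le_of_le_ofReal zero_le_one (by simpa using h)

lemma integral_rpow_mul_log_sq_le {l : ℝ} (hl : l ∈ Icc (-(1 / 2) : ℝ) 0)
    (hpos : ∀ᵐ x ∂P, 0 < Y x) (hY : Integrable Y P) (hYinv : Integrable (fun x => (Y x)⁻¹) P) :
    ∫ x, Y x ^ l * log (Y x) ^ 2 ∂P
      ≤ 16 * exp (-2) * ∫ x, (Y x)⁻¹ ∂P + 4 * exp (-2) * ∫ x, Y x ∂P := by
  rw [← integral_const_mul, ← integral_const_mul, ← integral_add (hYinv.const_mul _)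
    (hY.const_mul _)]
  refine integral_mono_of_nonneg ?_ ((hYinv.const_mul _).add (hY.const_mul _)) ?_
  · filter_upwards [hpos] with x hx
    exact mul_nonneg (rpow_nonneg hx.le l) (sq_nonneg _)
  · filter_upwards [hpos] with x hx
    exact rpow_mul_log_sq_le hl hx

end InverseMoment

lemma integral_one_sub_mul_le {F : Measure ℝ} [IsProbabilityMeasure F]
    (hint : Integrable (fun x : ℝ => x) F) {μ : ℝ} (hEF : ∫ x, x ∂F ≤ μ) (hμ : μ < 1)
    {ν : ℝ} (hν : ν ≤ (1 - μ)⁻¹) :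
    ∫ x, (1 - (x - μ) * ν) ∂F ≤ (1 - ∫ x, x ∂F) / (1 - μ) := by
  have hsub : Integrable (fun x : ℝ => (x - μ) * ν) F :=
    (hint.sub (integrable_const μ)).mul_const ν
  rw [integral_sub (integrable_const 1) hsub, integral_mul_const,
    integral_sub hint (integrable_const μ)]
  simp only [integral_const, probReal_univ, smul_eq_mul, one_mul]
  have hμ' : 0 < 1 - μ := by linarith
  calc 1 - (∫ x, x ∂F - μ) * ν ≤ 1 + (μ - ∫ x, x ∂F) * (1 - μ)⁻¹ := by
        nlinarith [mul_le_mul_of_nonneg_left hν (sub_nonneg.2 hEF)]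
    _ = (1 - ∫ x, x ∂F) / (1 - μ) := by field_simp; ring

theorem stmt15_general (F : Measure ℝ) [IsProbabilityMeasure F]
    (hint : Integrable (fun x : ℝ => x) F) (μ : ℝ) (hEF : ∫ x, x ∂F ≤ μ) (hμ : μ < 1)
    (ν' : ℝ) (hmem : ν' ∈ Set.Icc (0 : ℝ) (1 - μ)⁻¹)
    (hinv : ∫⁻ x, (ENNReal.ofReal (1 - (x - μ) * ν'))⁻¹ ∂F ≤ 1) :
    ∀ c0 : ℝ, 2.163 ≤ c0 → ∀ l ∈ Set.Icc (-(1 / 2) : ℝ) 0,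
      ∫ x, (1 - (x - μ) * ν') ^ l * (Real.log (1 - (x - μ) * ν')) ^ 2 ∂F
        ≤ c0 + (1 - ∫ x, x ∂F) / (1 - μ) := by
  intro c0 hc0 l hl
  set Y : ℝ → ℝ := fun x => 1 - (x - μ) * ν'
  have hYm : AEMeasurable Y F := by fun_prop
  have hYint : Integrable Y F :=
    (integrable_const 1).sub ((hint.sub (integrable_const μ)).mul_const ν')
  have hfin : ∫⁻ x, (ENNReal.ofReal (Y x))⁻¹ ∂F ≠ ∞ := ne_top_of_le_ne_top ENNReal.one_ne_top hinv
  have hbound := integral_rpow_mul_log_sq_le hl (ae_pos_of_lintegral_inv_ofReal_ne_top hYm hfin)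
    hYint (integrable_inv_of_lintegral_inv_ofReal_ne_top hYm hfin)
  have hinvY : ∫ x, (Y x)⁻¹ ∂F ≤ 1 := integral_inv_le_of_lintegral_inv_ofReal_le_one hYm hinv
  have hmeanY : ∫ x, Y x ∂F ≤ (1 - ∫ x, x ∂F) / (1 - μ) :=
    integral_one_sub_mul_le hint hEF hμ hmem.2
  -- With `k = e⁻² ≤ 1/7` and `T = (1 - E(F))/(1 - μ) ≥ 1`:
  -- `16k + 4kT = 20k + 4k(T - 1) ≤ 20/7 + (T - 1) ≤ c0 + T`.
  have hT : 1 ≤ (1 - ∫ x, x ∂F) / (1 - μ) := by rw [one_le_div (by linarith)]; linarith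
  have hk := exp_neg_two_le_one_div_seven
  have hk₀ := Real.exp_pos (-2)
  nlinarith [mul_le_mul_of_nonneg_left hinvY hk₀.le, mul_le_mul_of_nonneg_left hmeanY hk₀.le]

/-- In the setting of Lemma `lem_integrable`'s maximizer: with
`Y = 1-(X-μ)ν*`, for every `c0 ≥ 2.163` and `λ ∈ [-1/2,0]`,
`E[Y^λ (log Y)²] ≤ c0 + (1-E(F))/(1-μ)`. -/
theorem stmt15 (F : Measure ℝ) [IsProbabilityMeasure F] (hsupp : F (Set.Ioi 1) = 0)
    (hint : Integrable (fun x : ℝ => x) F) (μ : ℝ) (hEF : ∫ x, x ∂F ≤ μ) (hμ : μ < 1)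
    (ν' : ℝ) (hmem : ν' ∈ Set.Icc (0 : ℝ) (1 - μ)⁻¹)
    (hinv : ∫⁻ x, (ENNReal.ofReal (1 - (x - μ) * ν'))⁻¹ ∂F ≤ 1) :
    ∀ c0 : ℝ, 2.163 ≤ c0 → ∀ l ∈ Set.Icc (-(1 / 2) : ℝ) 0,
      ∫ x, (1 - (x - μ) * ν') ^ l * (Real.log (1 - (x - μ) * ν')) ^ 2 ∂F
        ≤ c0 + (1 - ∫ x, x ∂F) / (1 - μ) :=
  stmt15_general F hint μ hEF hμ ν' hmem hinv
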